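/- Let L be a nonempty language over a finite alphabet not containing the empty word. Then the radius of convergence of the necklace growth series F_{Necklaces(L)}(z) equals the unique positive real number t with F_L(t) = 1. -/
import Mathlib


/-- The `n`-tuples of words of `L` of total length `m`. -/
def LTuples {X : Type*} (L : Set (List X)) (n m : ℕ) : Type _ :=
  {v : Fin n → List X // (∀ i, v i ∈ L) ∧ (∑ i, (v i).length) = m}

/-- Cyclic rotation relation on `n`-tuples: `w` is a cyclic permutation of `v`. -/
def rotRel {X : Type*} (L : Set (List X)) (n m : ℕ) :
    LTuples L n m → LTuples L n m → Prop :=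
  fun v w => ∃ j : Fin n, ∀ i : Fin n, w.1 i = v.1 (i + j)

/-- The number of `C_n`-orbits (necklaces) of `n`-tuples of words of `L`
of total length `m`. -/
noncomputable def neckCount {X : Type*} (L : Set (List X)) (n m : ℕ) : ℕ :=
  Nat.card (Quot (rotRel L n m))

/-- The strict growth series of `L(z^k)`, i.e. of `F_L` with `z^k` substituted. -/
noncomputable def growthSeriesPow {X : Type*} [Fintype X] (L : Set (List X)) (k : ℕ) :
    PowerSeries ℕ :=
  PowerSeries.mk fun j => if k ∣ j then Set.ncard {w ∈ L | w.length = j / k} else 0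

open scoped ENNReal NNReal

set_option linter.unusedSectionVars false

section Aux
variable {X : Type*} [Fintype X] {L : Set (List X)}

lemma finite_level (L : Set (List X)) (m : ℕ) : {w ∈ L | w.length = m}.Finite :=
  (List.finite_length_eq X m).subset (fun _ hw => hw.2)

instance LTuples.finite (L : Set (List X)) (n m : ℕ) : Finite (LTuples L n m) := by
  have h : Finite {l : List X // l.length ≤ m} := (List.finite_length_le X m).to_subtype
  let f : LTuples L n m → (Fin n → {l : List X // l.length ≤ m}) := fun v i =>
    ⟨v.1 i, le_trans (Finset.single_le_sum (f := fun j => (v.1 j).length)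
      (fun _ _ => Nat.zero_le _) (Finset.mem_univ i)) (le_of_eq v.2.2)⟩
  have hf : Function.Injective f := by
    intro a b hab
    apply Subtype.ext; funext i
    exact congrArg Subtype.val (congrFun hab i)
  exact Finite.of_injective f hf

instance (L : Set (List X)) (n m : ℕ) : Finite (Quot (rotRel L n m)) :=
  Finite.of_surjective (Quot.mk _) Quot.mk_surjective

lemma rotRel_equiv (L : Set (List X)) (n m : ℕ) : Equivalence (rotRel L (n+1) m) := by
  constructor
  · intro v; exact ⟨0, fun i => by simp⟩
  · rintro v w ⟨j, hj⟩
    refine ⟨-j, fun i => ?_⟩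
    rw [hj (i + -j), neg_add_cancel_right]
  · rintro v w u ⟨j, hj⟩ ⟨k, hk⟩
    refine ⟨k + j, fun i => ?_⟩
    rw [hk i, hj (i + k), add_assoc]

def rotVal {L : Set (List X)} {n m : ℕ} (v : LTuples L (n+1) m) (j : Fin (n+1)) :
    LTuples L (n+1) m :=
  ⟨fun i => v.1 (i + j), ⟨fun i => v.2.1 _,
    (Fintype.sum_equiv (Equiv.addRight j) _ _ (fun i => rfl)).trans v.2.2⟩⟩

lemma neck_le_card (L : Set (List X)) (n m : ℕ) :
    neckCount L n m ≤ Nat.card (LTuples L n m) :=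
  Nat.card_le_card_of_surjective (Quot.mk _) Quot.mk_surjective

lemma card_le_neck (L : Set (List X)) (n m : ℕ) :
    Nat.card (LTuples L (n+1) m) ≤ (n+1) * neckCount L (n+1) m := by
  classical
  set r := rotRel L (n+1) m with hr
  have hs : Function.Surjective
      (fun p : Quot r × Fin (n+1) => rotVal p.1.out p.2) := by
    intro w
    have h1 : Quot.mk r (Quot.mk r w).out = Quot.mk r w := Quot.out_eq _
    have h2 : r (Quot.mk r w).out w :=
      ((rotRel_equiv L n m).eqvGen_iff).mp (Quot.eq.mp h1)
    obtain ⟨j, hj⟩ := h2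
    exact ⟨⟨Quot.mk r w, j⟩, (Subtype.ext (funext fun i => (hj i).symm))⟩
  calc Nat.card (LTuples L (n+1) m) ≤ Nat.card (Quot r × Fin (n+1)) :=
        Nat.card_le_card_of_surjective _ hs
    _ = (n+1) * neckCount L (n+1) m := by
        rw [Nat.card_prod, Nat.card_eq_fintype_card (α := Fin (n+1)), Fintype.card_fin,
          mul_comm]
        rfl

lemma neck_eq_zero (hL : [] ∉ L) {n m : ℕ} (h : m < n) : neckCount L n m = 0 := by
  have he : IsEmpty (LTuples L n m) := by
    constructor
    rintro ⟨v, hv, hsum⟩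
    have h1 : ∀ i, 1 ≤ (v i).length := by
      intro i
      rcases Nat.eq_zero_or_pos (v i).length with h0 | h0
      · exact absurd (List.length_eq_zero_iff.mp h0 ▸ hv i) hL
      · exact h0
    have : n ≤ m := by
      calc n = ∑ _i : Fin n, 1 := by simp
        _ ≤ ∑ i, (v i).length := Finset.sum_le_sum (fun i _ => h1 i)
        _ = m := hsum
    omega
  have : IsEmpty (Quot (rotRel L n m)) := Function.isEmpty Quot.out
  simp [neckCount, Nat.card_of_isEmpty]

end Aux

section Series
variable {X : Type*} [Fintype X]

/-- `n`-tuples of words of `L`. -/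
def LTup {X : Type*} (L : Set (List X)) (n : ℕ) : Type _ :=
  {v : Fin n → List X // ∀ i, v i ∈ L}

/-- value of F_L at x (ENNReal). -/
noncomputable def Aval (L : Set (List X)) (x : ℝ≥0∞) : ℝ≥0∞ :=
  ∑' m : ℕ, (Set.ncard {w ∈ L | w.length = m} : ℝ≥0∞) * x ^ m

lemma tsum_const_finite {α : Type*} [Finite α] (c : ℝ≥0∞) :
    ∑' _ : α, c = (Nat.card α : ℝ≥0∞) * c := by
  have := Fintype.ofFinite α
  rw [tsum_fintype, Finset.sum_const, Nat.card_eq_fintype_card, Finset.card_univ, nsmul_eq_mul]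

def eqLevel (L : Set (List X)) : (Σ m : ℕ, {w ∈ L | w.length = m}) ≃ L :=
  { toFun := fun p => ⟨p.2.1, p.2.2.1⟩
    invFun := fun w => ⟨(w : List X).length, ⟨w.1, w.2, rfl⟩⟩
    left_inv := by rintro ⟨m, w, hw, rfl⟩; rfl
    right_inv := fun w => rfl }

lemma Aval_eq (L : Set (List X)) (x : ℝ≥0∞) :
    Aval L x = ∑' w : L, x ^ (w : List X).length := by
  classical
  rw [← (eqLevel L).tsum_eq (fun w => x ^ (w : List X).length), ENNReal.tsum_sigma']
  refine tsum_congr fun m => ?_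
  symm
  have h1 : ∀ w : {w ∈ L | w.length = m}, x ^ ((eqLevel L ⟨m, w⟩ : List X).length) = x ^ m := by
    rintro ⟨w, hw, hlen⟩
    show x ^ w.length = x ^ m
    rw [hlen]
  have : Finite {w ∈ L | w.length = m} := (finite_level L m).to_subtype
  rw [tsum_congr h1, tsum_const_finite, Nat.card_coe_set_eq]

def eqCons (L : Set (List X)) (n : ℕ) : (L × LTup L n) ≃ LTup L (n+1) :=
  { toFun := fun p => ⟨Fin.cons p.1.1 p.2.1, fun i => Fin.cases p.1.2 p.2.2 i⟩
    invFun := fun v => (⟨v.1 0, v.2 0⟩, ⟨Fin.tail v.1, fun i => v.2 i.succ⟩)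
    left_inv := by
      rintro ⟨⟨w, hw⟩, ⟨v, hv⟩⟩
      refine Prod.ext (Subtype.ext ?_) (Subtype.ext ?_)
      · simp
      · simp [Fin.tail_cons]
    right_inv := by
      rintro ⟨v, hv⟩
      exact Subtype.ext (Fin.cons_self_tail v) }

/-- value of F_L^n at x, as a sum over tuples. -/
noncomputable def Pval (L : Set (List X)) (n : ℕ) (x : ℝ≥0∞) : ℝ≥0∞ :=
  ∑' v : LTup L n, x ^ (∑ i, (v.1 i).length)

lemma Pval_zero (L : Set (List X)) (x : ℝ≥0∞) : Pval L 0 x = 1 := by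
  have : Unique (LTup L 0) :=
    { default := ⟨fun i => i.elim0, fun i => i.elim0⟩
      uniq := fun v => Subtype.ext (funext fun i => i.elim0) }
  rw [Pval, tsum_eq_single default (fun v hv => absurd (Subsingleton.elim v default) hv)]
  simp

lemma Pval_succ (L : Set (List X)) (n : ℕ) (x : ℝ≥0∞) :
    Pval L (n+1) x = Aval L x * Pval L n x := by
  classical
  rw [Pval, ← (eqCons L n).tsum_eq (fun v : LTup L (n+1) => x ^ (∑ i, (v.1 i).length))]
  have key : ∀ p : L × LTup L n,
      x ^ (∑ i, (((eqCons L n p).1 : Fin (n+1) → List X) i).length)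
        = x ^ ((p.1 : List X).length) * x ^ (∑ i, (p.2.1 i).length) := by
    rintro ⟨⟨w, hw⟩, ⟨v, hv⟩⟩
    have h1 : ((eqCons L n (⟨w, hw⟩, ⟨v, hv⟩)).1 : Fin (n+1) → List X) = Fin.cons w v := rfl
    rw [← pow_add]
    congr 1
    rw [h1, Fin.sum_univ_succ, Fin.cons_zero]
    simp [Fin.cons_succ]
  calc (∑' p : L × LTup L n, x ^ (∑ i, (((eqCons L n p).1 : Fin (n+1) → List X) i).length))
      = ∑' p : L × LTup L n, x ^ ((p.1 : List X).length) * x ^ (∑ i, (p.2.1 i).length) :=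
        tsum_congr key
    _ = ∑' (w : L) (v : LTup L n), x ^ ((w : List X).length) * x ^ (∑ i, (v.1 i).length) :=
        ENNReal.tsum_prod'
    _ = ∑' w : L, x ^ ((w : List X).length) * Pval L n x := by
        refine tsum_congr fun w => ?_
        rw [ENNReal.tsum_mul_left]
        rfl
    _ = Aval L x * Pval L n x := by rw [ENNReal.tsum_mul_right, Aval_eq]

lemma Pval_pow (L : Set (List X)) (n : ℕ) (x : ℝ≥0∞) : Pval L n x = (Aval L x) ^ n := by
  induction n with
  | zero => simpa using Pval_zero L x
  | succ k ih => rw [Pval_succ, ih, pow_succ, mul_comm]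

def eqSigmaT (L : Set (List X)) (n : ℕ) : (Σ m : ℕ, LTuples L n m) ≃ LTup L n :=
  { toFun := fun p => ⟨p.2.1, p.2.2.1⟩
    invFun := fun v => ⟨∑ i, (v.1 i).length, ⟨v.1, v.2, rfl⟩⟩
    left_inv := by rintro ⟨m, v, hv, rfl⟩; rfl
    right_inv := fun v => rfl }

lemma Pval_eq_T (L : Set (List X)) (n : ℕ) (x : ℝ≥0∞) :
    Pval L n x = ∑' m : ℕ, (Nat.card (LTuples L n m) : ℝ≥0∞) * x ^ m := by
  classical
  rw [Pval, ← (eqSigmaT L n).tsum_eq, ENNReal.tsum_sigma']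
  refine tsum_congr fun m => ?_
  have h1 : ∀ v : LTuples L n m,
      x ^ (∑ i, (((eqSigmaT L n ⟨m, v⟩).1 : Fin n → List X) i).length) = x ^ m := by
    rintro ⟨v, hv, hs⟩
    show x ^ (∑ i, (v i).length) = x ^ m
    rw [hs]
  rw [tsum_congr h1, tsum_const_finite]

end Series

section Main
variable {X : Type*} [Fintype X]

noncomputable def Bval (L : Set (List X)) (n : ℕ) (x : ℝ≥0∞) : ℝ≥0∞ :=
  ∑' m : ℕ, (neckCount L (n+1) m : ℝ≥0∞) * x ^ m

lemma Bval_le (L : Set (List X)) (n : ℕ) (x : ℝ≥0∞) : Bval L n x ≤ (Aval L x) ^ (n+1) := by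
  rw [← Pval_pow, Pval_eq_T]
  exact ENNReal.tsum_le_tsum fun m =>
    mul_le_mul_left (Nat.cast_le.mpr (neck_le_card L (n+1) m)) _

lemma le_Bval (L : Set (List X)) (n : ℕ) (x : ℝ≥0∞) :
    (Aval L x) ^ (n+1) ≤ ((n : ℝ≥0∞) + 1) * Bval L n x := by
  rw [← Pval_pow, Pval_eq_T, Bval, ← ENNReal.tsum_mul_left]
  refine ENNReal.tsum_le_tsum fun m => ?_
  rw [← mul_assoc]
  refine mul_le_mul_left ?_ _
  calc (Nat.card (LTuples L (n+1) m) : ℝ≥0∞)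
      ≤ (((n+1) * neckCount L (n+1) m : ℕ) : ℝ≥0∞) := Nat.cast_le.mpr (card_le_neck L n m)
    _ = ((n : ℝ≥0∞) + 1) * (neckCount L (n+1) m : ℝ≥0∞) := by push_cast; ring

noncomputable def Gval (L : Set (List X)) (x : ℝ≥0∞) : ℝ≥0∞ :=
  ∑' m : ℕ, (∑' n : ℕ, (neckCount L (n+1) m : ℝ≥0∞)) * x ^ m

lemma Gval_eq (L : Set (List X)) (x : ℝ≥0∞) : Gval L x = ∑' n : ℕ, Bval L n x := by
  rw [Gval]
  calc (∑' m : ℕ, (∑' n : ℕ, (neckCount L (n+1) m : ℝ≥0∞)) * x ^ m)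
      = ∑' (m : ℕ) (n : ℕ), (neckCount L (n+1) m : ℝ≥0∞) * x ^ m :=
        tsum_congr fun m => ENNReal.tsum_mul_right.symm
    _ = ∑' (n : ℕ) (m : ℕ), (neckCount L (n+1) m : ℝ≥0∞) * x ^ m := ENNReal.tsum_comm
    _ = ∑' n : ℕ, Bval L n x := rfl

lemma Aval_mono (L : Set (List X)) {x y : ℝ≥0∞} (h : x ≤ y) : Aval L x ≤ Aval L y :=
  ENNReal.tsum_le_tsum fun m => mul_le_mul_right (pow_le_pow_left' h m) _

lemma tsum_inv_succ_top : (∑' n : ℕ, ((n : ℝ≥0∞) + 1)⁻¹) = ⊤ := by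
  by_contra h
  have h2 : ∀ n : ℕ, ((n : ℝ≥0∞) + 1)⁻¹ = ((((n : ℝ≥0) + 1)⁻¹ : ℝ≥0) : ℝ≥0∞) := by
    intro n
    rw [ENNReal.coe_inv (by positivity), ENNReal.coe_add, ENNReal.coe_natCast, ENNReal.coe_one]
  rw [tsum_congr h2] at h
  have h3 := ENNReal.tsum_coe_ne_top_iff_summable.mp h
  have h4 : Summable (fun n : ℕ => ((((n:ℝ≥0) + 1)⁻¹ : ℝ≥0) : ℝ)) := NNReal.summable_coe.mpr h3
  have h5 : Summable (fun n : ℕ => (1 : ℝ) / ((n : ℕ) + 1)) := by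
    refine h4.congr fun n => ?_
    push_cast
    rw [one_div]
  have h6 : Summable (fun n : ℕ => (1 : ℝ) / n) := (summable_nat_add_iff 1).mp (by
    refine h5.congr fun n => ?_
    push_cast
    ring_nf)
  exact Real.not_summable_one_div_natCast h6

lemma Gval_ne_top (L : Set (List X)) {x : ℝ≥0∞} (hA : Aval L x < 1) : Gval L x ≠ ⊤ := by
  have hle : Gval L x ≤ Aval L x * (1 - Aval L x)⁻¹ := by
    rw [Gval_eq]
    calc (∑' n : ℕ, Bval L n x) ≤ ∑' n : ℕ, (Aval L x) ^ (n+1) :=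
          ENNReal.tsum_le_tsum fun n => Bval_le L n x
      _ = Aval L x * ∑' n : ℕ, (Aval L x) ^ n := by
          rw [← ENNReal.tsum_mul_left]
          exact tsum_congr fun n => pow_succ' (Aval L x) n
      _ = Aval L x * (1 - Aval L x)⁻¹ := by rw [ENNReal.tsum_geometric]
  refine ne_top_of_le_ne_top ?_ hle
  refine ENNReal.mul_ne_top (hA.trans_le le_top).ne ?_
  rw [Ne, ENNReal.inv_eq_top, tsub_eq_zero_iff_le]
  exact not_le.mpr hA

lemma Gval_eq_top (L : Set (List X)) {x : ℝ≥0∞} (hA : 1 ≤ Aval L x) : Gval L x = ⊤ := by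
  rw [Gval_eq]
  refine top_le_iff.mp ?_
  calc (⊤ : ℝ≥0∞) = ∑' n : ℕ, ((n : ℝ≥0∞) + 1)⁻¹ := tsum_inv_succ_top.symm
    _ ≤ ∑' n : ℕ, Bval L n x := by
      refine ENNReal.tsum_le_tsum fun n => ?_
      have h0 : ((n : ℝ≥0∞) + 1) ≠ 0 := by
        simp
      have htop : ((n : ℝ≥0∞) + 1) ≠ ⊤ := by
        exact ENNReal.add_ne_top.mpr ⟨ENNReal.natCast_ne_top n, ENNReal.one_ne_top⟩
      calc ((n : ℝ≥0∞) + 1)⁻¹ = ((n : ℝ≥0∞) + 1)⁻¹ * 1 := (mul_one _).symm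
        _ ≤ ((n : ℝ≥0∞) + 1)⁻¹ * (Aval L x) ^ (n+1) :=
            mul_le_mul_right (Left.one_le_pow_of_le hA (n+1)) _
        _ ≤ ((n : ℝ≥0∞) + 1)⁻¹ * (((n : ℝ≥0∞) + 1) * Bval L n x) :=
            mul_le_mul_right (le_Bval L n x) _
        _ = Bval L n x := by rw [← mul_assoc, ENNReal.inv_mul_cancel h0 htop, one_mul]

end Main

/-- The radius of convergence of the necklace growth series
`F_{Necklaces(L)}(z) = ∑_m (∑_{n≥1} |L^{×n}/C_n|_m) z^m` of a nonempty language `L`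
over a finite alphabet not containing the empty word equals the unique positive real
`t` with `F_L(t) = 1`. (The radius of convergence of a series with nonnegative
coefficients is the supremum of the nonnegative reals at which it converges.) -/
theorem radius_necklaceSeries {X : Type*} [Fintype X] (L : Set (List X))
    (hL : [] ∉ L) (hne : L.Nonempty)
    (t : ℝ) (ht : 0 < t)
    (hsum : Summable fun m : ℕ => (Set.ncard {w ∈ L | w.length = m} : ℝ) * t ^ m)
    (h1 : (∑' m : ℕ, (Set.ncard {w ∈ L | w.length = m} : ℝ) * t ^ m) = 1) :
    sSup {r : ℝ | 0 ≤ r ∧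
        Summable fun m : ℕ => (∑' n : ℕ, (neckCount L (n + 1) m : ℝ)) * r ^ m} = t := by
  classical
  set S := {r : ℝ | 0 ≤ r ∧
      Summable fun m : ℕ => (∑' n : ℕ, (neckCount L (n + 1) m : ℝ)) * r ^ m} with hS
  set N : ℕ → ℕ := fun m => ∑ n ∈ Finset.range m, neckCount L (n+1) m with hNdef
  -- vanishing of neckCount for n ≥ m
  have hvanish : ∀ m : ℕ, ∀ n ∉ Finset.range m, neckCount L (n+1) m = 0 := by
    intro m n hn
    rw [Finset.mem_range, not_lt] at hn
    exact neck_eq_zero hL (by omega)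
  have hN : ∀ m : ℕ, (∑' n : ℕ, (neckCount L (n + 1) m : ℝ)) = (N m : ℝ) := by
    intro m
    rw [tsum_eq_sum (s := Finset.range m) (fun n hn => by rw [hvanish m n hn]; simp)]
    simp only [hNdef, Nat.cast_sum]
  have hNe : ∀ m : ℕ, (∑' n : ℕ, (neckCount L (n + 1) m : ℝ≥0∞)) = (N m : ℝ≥0∞) := by
    intro m
    rw [tsum_eq_sum (s := Finset.range m) (fun n hn => by rw [hvanish m n hn]; simp)]
    simp only [hNdef, Nat.cast_sum]
  -- S membership rephrased
  have hmemS : ∀ r : ℝ, r ∈ S ↔ 0 ≤ r ∧ Summable fun m : ℕ => (N m : ℝ) * r ^ m := by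
    intro r
    rw [hS, Set.mem_setOf_eq]
    constructor
    · rintro ⟨hr, hsumr⟩
      exact ⟨hr, hsumr.congr fun m => by rw [hN m]⟩
    · rintro ⟨hr, hsumr⟩
      exact ⟨hr, hsumr.congr fun m => by rw [hN m]⟩
  -- key equivalence to Gval
  have hkey : ∀ r : ℝ, 0 ≤ r →
      ((Summable fun m : ℕ => (N m : ℝ) * r ^ m) ↔ Gval L (ENNReal.ofReal r) ≠ ⊤) := by
    intro r hr
    set f : ℕ → ℝ≥0 := fun m => (N m : ℝ≥0) * r.toNNReal ^ m with hf
    have coeR : ∀ m, ((f m : ℝ)) = (N m : ℝ) * r ^ m := by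
      intro m
      rw [hf]
      push_cast
      rw [Real.coe_toNNReal r hr]
    have hG : Gval L (ENNReal.ofReal r) = ∑' m : ℕ, (f m : ℝ≥0∞) := by
      rw [Gval]
      refine tsum_congr fun m => ?_
      rw [hNe m, hf, ENNReal.ofReal]
      push_cast
      rfl
    constructor
    · intro hs
      rw [hG]
      exact ENNReal.tsum_coe_ne_top_iff_summable.mpr
        (NNReal.summable_coe.mp (hs.congr fun m => (coeR m).symm))
    · intro hG'
      rw [hG] at hG'
      have := NNReal.summable_coe.mpr (ENNReal.tsum_coe_ne_top_iff_summable.mp hG')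
      exact this.congr coeR
  -- Aval at t equals 1
  have hofReal : ∀ r : ℝ, 0 ≤ r → (Summable fun m : ℕ =>
      (Set.ncard {w ∈ L | w.length = m} : ℝ) * r ^ m) →
      Aval L (ENNReal.ofReal r)
        = ENNReal.ofReal (∑' m : ℕ, (Set.ncard {w ∈ L | w.length = m} : ℝ) * r ^ m) := by
    intro r hr hsumr
    rw [ENNReal.ofReal_tsum_of_nonneg (fun m => by positivity) hsumr]
    refine tsum_congr fun m => ?_
    rw [ENNReal.ofReal_mul (by positivity), ENNReal.ofReal_pow hr, ENNReal.ofReal_natCast]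
  have hAt : Aval L (ENNReal.ofReal t) = 1 := by
    rw [hofReal t ht.le hsum, h1, ENNReal.ofReal_one]
  -- strict inequality below t
  have hAlt : ∀ r : ℝ, 0 ≤ r → r < t → Aval L (ENNReal.ofReal r) < 1 := by
    intro r hr hrt
    obtain ⟨w, hw⟩ := hne
    have hm0 : w.length ≠ 0 := fun h => hL (List.length_eq_zero_iff.mp h ▸ hw)
    have ha0 : 0 < Set.ncard {w' ∈ L | w'.length = w.length} :=
      (Set.ncard_pos (finite_level L w.length)).mpr ⟨w, hw, rfl⟩
    have hle : ∀ m : ℕ, (Set.ncard {w ∈ L | w.length = m} : ℝ) * r ^ m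
        ≤ (Set.ncard {w ∈ L | w.length = m} : ℝ) * t ^ m := fun m =>
      mul_le_mul_of_nonneg_left (pow_le_pow_left₀ hr hrt.le m) (by positivity)
    have hstrict : (Set.ncard {w' ∈ L | w'.length = w.length} : ℝ) * r ^ w.length
        < (Set.ncard {w' ∈ L | w'.length = w.length} : ℝ) * t ^ w.length := by
      have : (0:ℝ) < (Set.ncard {w' ∈ L | w'.length = w.length} : ℝ) := by
        exact_mod_cast ha0
      exact mul_lt_mul_of_pos_left (pow_lt_pow_left₀ hrt hr hm0) this
    have hsumr : Summable fun m : ℕ => (Set.ncard {w ∈ L | w.length = m} : ℝ) * r ^ m :=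
      Summable.of_nonneg_of_le (fun m => by positivity) hle hsum
    have hlt : (∑' m : ℕ, (Set.ncard {w ∈ L | w.length = m} : ℝ) * r ^ m) < 1 := by
      rw [← h1]
      exact Summable.tsum_lt_tsum_of_nonneg (fun m => by positivity) hle hstrict hsum
    rw [hofReal r hr hsumr]
    exact ENNReal.ofReal_lt_one.mpr hlt
  -- membership below t
  have hmem : ∀ r : ℝ, 0 ≤ r → r < t → r ∈ S := by
    intro r hr hrt
    refine (hmemS r).mpr ⟨hr, (hkey r hr).mpr ?_⟩
    exact Gval_ne_top L (hAlt r hr hrt)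
  -- upper bound
  have hub : ∀ r ∈ S, r ≤ t := by
    intro r hrS
    by_contra hrt
    push_neg at hrt
    obtain ⟨hr, hsumr⟩ := (hmemS r).mp hrS
    have hA1 : 1 ≤ Aval L (ENNReal.ofReal r) := by
      rw [← hAt]
      exact Aval_mono L (ENNReal.ofReal_le_ofReal hrt.le)
    exact ((hkey r hr).mp hsumr) (Gval_eq_top L hA1)
  have hSne : S.Nonempty := ⟨0, hmem 0 le_rfl ht⟩
  have hSbdd : BddAbove S := ⟨t, hub⟩
  refine le_antisymm (csSup_le hSne hub) ?_
  by_contra hlt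
  push_neg at hlt
  have hmax : max (sSup S) 0 < t := max_lt hlt ht
  set r := (max (sSup S) 0 + t) / 2 with hr
  have h0r : 0 ≤ r := by
    have := le_max_right (sSup S) 0
    rw [hr]; linarith
  have hrt : r < t := by rw [hr]; linarith
  have hrS : r ∈ S := hmem r h0r hrt
  have : r ≤ sSup S := le_csSup hSbdd hrS
  have : sSup S ≤ max (sSup S) 0 := le_max_left _ _
  have hrr : max (sSup S) 0 < r := by rw [hr]; linarith
  linarith
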